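/- For every integer n ≥ 19 and every integer m with n − 6 ≤ m ≤ n, there exists a partition p of n such that λ(p) = m. -/

import Mathlib

/-!
Given a small partition `S` (a *core*), put a row of length `e + |S| + 3` on top of it and `e`
parts equal to `1` below it. This is a partition of `n = 2e + |S| + 3 + ΣS`, and
`n − λ` does not depend on `e`. So a single core handles, for every `n` of one parity, one
value of `n − m`; seven cores per parity, all of size `|S| + 3 + ΣS ≤ 20`, cover `0 ≤ n − m ≤ 6`.
-/

/-- `λ(p) = (1/2)·Σ_{j=1}^k n_j·(n_j − 2j + 1)` for a finite sequence of naturals. -/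
def transLam (L : List ℕ) : ℚ :=
  (∑ j ∈ Finset.range L.length,
    (L.getD j 0 : ℚ) * ((L.getD j 0 : ℚ) - 2 * ((j : ℚ) + 1) + 1)) / 2

/-- A partition of `n`: a nonincreasing list of positive integers summing to `n`. -/
def IsPartitionOf (n : ℕ) (L : List ℕ) : Prop :=
  L.Pairwise (· ≥ ·) ∧ (∀ x ∈ L, 0 < x) ∧ L.sum = n

theorem List.sum_range_getD_eq_sum_map {α M : Type*} [AddCommMonoid M] (L : List α) (a : α)
    (f : α → M) :
    ∑ j ∈ Finset.range L.length, f (L.getD j a) = (L.map f).sum := by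
  induction L with
  | nil => simp
  | cons x L ih =>
    rw [List.length_cons, Finset.sum_range_succ', add_comm]
    simp only [List.getD_cons_succ, List.getD_cons_zero, ih, List.map_cons, List.sum_cons]

theorem transLam_nil : transLam [] = 0 := by simp [transLam]

theorem transLam_cons (x : ℕ) (L : List ℕ) :
    transLam (x :: L) = x * (x - 1) / 2 + transLam L - L.sum := by
  have hsum : ∑ j ∈ Finset.range L.length, (L.getD j 0 : ℚ) = L.sum := by
    rw [L.sum_range_getD_eq_sum_map 0 _, Nat.cast_list_sum]
  simp only [transLam, List.length_cons, Finset.sum_range_succ', List.getD_cons_succ,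
    List.getD_cons_zero]
  have hshift : ∑ j ∈ Finset.range L.length,
      (L.getD j 0 : ℚ) * ((L.getD j 0 : ℚ) - 2 * (((j + 1 : ℕ) : ℚ) + 1) + 1) =
      ∑ j ∈ Finset.range L.length, (L.getD j 0 : ℚ) * ((L.getD j 0 : ℚ) - 2 * ((j : ℚ) + 1) + 1)
        - 2 * ∑ j ∈ Finset.range L.length, (L.getD j 0 : ℚ) := by
    rw [Finset.mul_sum, ← Finset.sum_sub_distrib]
    refine Finset.sum_congr rfl fun j _ => ?_
    push_cast
    ring
  rw [hshift, hsum]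
  push_cast
  ring

theorem transLam_append_replicate_one (P : List ℕ) (e : ℕ) :
    transLam (P ++ List.replicate e 1) = transLam P - e * P.length - e * (e - 1) / 2 := by
  induction P with
  | nil =>
    induction e with
    | zero => simp [transLam_nil]
    | succ e ih =>
      rw [List.nil_append] at ih ⊢
      rw [List.replicate_succ, transLam_cons, ih, List.sum_replicate, smul_eq_mul, mul_one]
      push_cast [List.length_nil]
      ring
  | cons x P ih =>
    rw [List.cons_append, transLam_cons, transLam_cons, ih, List.sum_append, List.sum_replicate,
      smul_eq_mul, mul_one, List.length_cons]
    push_cast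
    ring

def hookExtend (S : List ℕ) (e : ℕ) : List ℕ := (e + S.length + 3) :: (S ++ List.replicate e 1)

def coreSize (S : List ℕ) : ℕ := S.length + 3 + S.sum

def coreDefect (S : List ℕ) : ℚ :=
  S.length + 3 + 2 * S.sum - (S.length + 3) * (S.length + 2) / 2 - transLam S

theorem isPartitionOf_hookExtend {S : List ℕ} (hS : S.Pairwise (· ≥ ·))
    (hbound : ∀ x ∈ S, 0 < x ∧ x ≤ S.length + 3) (e : ℕ) :
    IsPartitionOf (2 * e + coreSize S) (hookExtend S e) := by
  refine ⟨?_, ?_, ?_⟩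
  · refine List.pairwise_cons.2 ⟨fun x hx => ?_, List.pairwise_append.2 ⟨hS, ?_, ?_⟩⟩
    · rcases List.mem_append.1 hx with hx | hx
      · have := (hbound x hx).2; omega
      · rw [List.eq_of_mem_replicate hx]; omega
    · exact List.pairwise_replicate.2 (Or.inr le_rfl)
    · intro x hx y hy
      rw [List.eq_of_mem_replicate hy]
      exact (hbound x hx).1
  · intro x hx
    rcases List.mem_cons.1 hx with rfl | hx
    · omega
    rcases List.mem_append.1 hx with hx | hx
    · exact (hbound x hx).1
    · rw [List.eq_of_mem_replicate hx]; exact Nat.one_pos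
  · simp only [hookExtend, coreSize, List.sum_cons, List.sum_append, List.sum_replicate, smul_eq_mul,
      mul_one]
    omega

theorem transLam_hookExtend (S : List ℕ) (e : ℕ) :
    transLam (hookExtend S e) = ((2 * e + coreSize S : ℕ) : ℚ) - coreDefect S := by
  rw [hookExtend, ← List.cons_append, transLam_append_replicate_one, transLam_cons, coreDefect, coreSize]
  push_cast [List.length_cons]
  ring

def coreOfDefect : ℕ → ℕ → List ℕ
  | 0, 0 => [4]
  | 0, 1 => [2]
  | 0, 2 => [6, 5, 3]
  | 0, 3 => [3, 2]
  | 0, 4 => [5, 3, 2]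
  | 0, 5 => [4, 2, 2]
  | 0, 6 => [2, 2, 2]
  | 1, 0 => []
  | 1, 1 => [3]
  | 1, 2 => [4, 2]
  | 1, 3 => [2, 2]
  | 1, 4 => [3, 3]
  | 1, 5 => [5, 5, 3]
  | 1, 6 => [3, 2, 2]
  | _, _ => []

theorem coreOfDefect_spec {r d : ℕ} (hr : r < 2) (hd : d ≤ 6) :
    (coreOfDefect r d).Pairwise (· ≥ ·) ∧
    (∀ x ∈ coreOfDefect r d, 0 < x ∧ x ≤ (coreOfDefect r d).length + 3) ∧
    coreSize (coreOfDefect r d) % 2 = r ∧ coreSize (coreOfDefect r d) ≤ 20 ∧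
    coreDefect (coreOfDefect r d) = d := by
  interval_cases r <;> interval_cases d <;>
    norm_num [coreOfDefect, coreSize, coreDefect, transLam_cons, transLam_nil]

theorem set_A2_in_spectrum (n : ℕ) (hn : 19 ≤ n) (m : ℕ)
    (h1 : n - 6 ≤ m) (h2 : m ≤ n) :
    ∃ L : List ℕ, IsPartitionOf n L ∧ transLam L = (m : ℚ) := by
  obtain ⟨hS, hbound, hparity, hsize, hdefect⟩ :=
    coreOfDefect_spec (Nat.mod_lt n two_pos) (show n - m ≤ 6 by omega)
  set S := coreOfDefect (n % 2) (n - m)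
  obtain ⟨e, he⟩ : ∃ e, n = 2 * e + coreSize S := ⟨(n - coreSize S) / 2, by omega⟩
  refine ⟨hookExtend S e, he ▸ isPartitionOf_hookExtend hS hbound e, ?_⟩
  rw [transLam_hookExtend, ← he, hdefect, Nat.cast_sub h2]
  ring
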